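/- For all t ≥ 0 one has t ≤ h(t) ≤ e^{b₀}·t; moreover h' is nondecreasing on [0,∞) and satisfies 1 ≤ h'(t) ≤ 1 + b₀·e^{b₀} for all t ≥ 0. -/

import Mathlib

/-!
Since `(h h')' = h'² + λ h² ≥ 0` and `h 0 = 0`, we get `h h' ≥ 0`; then `(h'²)' = 2 λ h h' ≥ 0`
gives `h'² ≥ 1`, and as `h'` is continuous with `h' 0 = 1` it never drops below `1`. Hence
`h t ≥ t ≥ 0`, so `h'' = λ h ≥ 0`, and `(t h' - h)' = t λ h ≥ 0` gives `h ≤ t h'`. With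
`ψ t = ∫₀ᵗ s λ(s) ds ≤ b₀`, this last bound makes `e^{-ψ} h'` nonincreasing, so `h' ≤ e^{b₀}` and
`h ≤ e^{b₀} t`; the latter makes `h' - e^{b₀} ψ` nonincreasing, so `h' ≤ 1 + b₀ e^{b₀}`.
-/

open Set MeasureTheory

theorem monotoneOn_Ici_of_hasDerivWithinAt_nonneg {f f' : ℝ → ℝ} {a : ℝ}
    (hf : ∀ x ∈ Ici a, HasDerivWithinAt f (f' x) (Ici a) x) (hf' : ∀ x ∈ Ioi a, 0 ≤ f' x) :
    MonotoneOn f (Ici a) :=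
  monotoneOn_of_hasDerivWithinAt_nonneg (convex_Ici a)
    (fun x hx => (hf x hx).continuousWithinAt)
    (by rw [interior_Ici]; exact fun x hx => (hf x (mem_Ici_of_Ioi hx)).mono Ioi_subset_Ici_self)
    (by rwa [interior_Ici])

theorem antitoneOn_Ici_of_hasDerivWithinAt_nonpos {f f' : ℝ → ℝ} {a : ℝ}
    (hf : ∀ x ∈ Ici a, HasDerivWithinAt f (f' x) (Ici a) x) (hf' : ∀ x ∈ Ioi a, f' x ≤ 0) :
    AntitoneOn f (Ici a) :=
  antitoneOn_of_hasDerivWithinAt_nonpos (convex_Ici a)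
    (fun x hx => (hf x hx).continuousWithinAt)
    (by rw [interior_Ici]; exact fun x hx => (hf x (mem_Ici_of_Ioi hx)).mono Ioi_subset_Ici_self)
    (by rwa [interior_Ici])

theorem hasDerivWithinAt_intervalIntegral_Ici {f : ℝ → ℝ} {a t : ℝ} (hf : ContinuousOn f (Ici a))
    (ht : t ∈ Ici a) : HasDerivWithinAt (fun u => ∫ x in a..u, f x) (f t) (Ici a) t := by
  have hint : IntervalIntegrable f volume a t :=
    (hf.mono (by rw [uIcc_of_le (mem_Ici.mp ht)]; exact Icc_subset_Ici_self)).intervalIntegrable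
  rcases (mem_Ici.mp ht).eq_or_lt with rfl | hat
  · exact intervalIntegral.integral_hasDerivWithinAt_right hint
      ((hf.mono Ioi_subset_Ici_self).stronglyMeasurableAtFilter_nhdsWithin measurableSet_Ioi a)
      ((hf a ht).mono Ioi_subset_Ici_self)
  · exact (intervalIntegral.integral_hasDerivAt_right hint
      ((hf.mono Ioi_subset_Ici_self).stronglyMeasurableAtFilter isOpen_Ioi t hat)
      (hf.continuousAt (Ici_mem_nhds hat))).hasDerivWithinAt

theorem intervalIntegral_le_integral_Ioi {f : ℝ → ℝ} {a t : ℝ} (hf : IntegrableOn f (Ioi a))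
    (hf₀ : ∀ x ∈ Ioi a, 0 ≤ f x) (ht : a ≤ t) : ∫ x in a..t, f x ≤ ∫ x in Ioi a, f x := by
  rw [intervalIntegral.integral_of_le ht]
  exact setIntegral_mono_set hf ((ae_restrict_iff' measurableSet_Ioi).mpr (ae_of_all _ hf₀))
    Ioc_subset_Ioi_self.eventuallyLE

/-- `h'' = λ h` on `[0, ∞)` with `h 0 = 0`, `h' 0 = 1`, written with `g = h'`. -/
structure IsIVPSolution (lam h g : ℝ → ℝ) : Prop where
  hasDerivWithinAt : ∀ t ∈ Ici (0 : ℝ), HasDerivWithinAt h (g t) (Ici 0) t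
  hasDerivWithinAt_deriv : ∀ t ∈ Ici (0 : ℝ), HasDerivWithinAt g (lam t * h t) (Ici 0) t
  map_zero : h 0 = 0
  deriv_zero : g 0 = 1

namespace IsIVPSolution

variable {lam h g : ℝ → ℝ}

theorem mul_deriv_nonneg (hs : IsIVPSolution lam h g) (hlam : ∀ t ∈ Ici (0 : ℝ), 0 ≤ lam t)
    {t : ℝ} (ht : t ∈ Ici 0) : 0 ≤ h t * g t := by
  have hmono : MonotoneOn (fun t => h t * g t) (Ici 0) :=
    monotoneOn_Ici_of_hasDerivWithinAt_nonneg
      (fun x hx => (hs.hasDerivWithinAt x hx).mul (hs.hasDerivWithinAt_deriv x hx))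
      fun x hx => by
        nlinarith [mul_self_nonneg (g x),
          mul_nonneg (hlam x (mem_Ici_of_Ioi hx)) (mul_self_nonneg (h x))]
  simpa [hs.map_zero] using hmono self_mem_Ici ht ht

theorem one_le_deriv_sq (hs : IsIVPSolution lam h g) (hlam : ∀ t ∈ Ici (0 : ℝ), 0 ≤ lam t)
    {t : ℝ} (ht : t ∈ Ici 0) : 1 ≤ g t ^ 2 := by
  have hmono : MonotoneOn (fun t => g t ^ 2) (Ici 0) :=
    monotoneOn_Ici_of_hasDerivWithinAt_nonneg
      (fun x hx => (hs.hasDerivWithinAt_deriv x hx).pow 2)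
      fun x hx => by
        have hx' := mem_Ici_of_Ioi hx
        have := mul_nonneg (hlam x hx') (hs.mul_deriv_nonneg hlam hx')
        simp only [Nat.cast_ofNat, Nat.add_one_sub_one, pow_one]
        nlinarith
  simpa [hs.deriv_zero] using hmono self_mem_Ici ht ht

theorem one_le_deriv (hs : IsIVPSolution lam h g) (hlam : ∀ t ∈ Ici (0 : ℝ), 0 ≤ lam t)
    {t : ℝ} (ht : t ∈ Ici 0) : 1 ≤ g t := by
  by_contra! hlt
  have hneg : g t < 0 := by nlinarith [hs.one_le_deriv_sq hlam ht]
  have hcont : ContinuousOn g (Icc 0 t) := fun x hx =>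
    (hs.hasDerivWithinAt_deriv x hx.1).continuousWithinAt.mono Icc_subset_Ici_self
  obtain ⟨s, hs_mem, hgs⟩ := intermediate_value_Icc' (mem_Ici.mp ht) hcont
    ⟨hneg.le, hs.deriv_zero ▸ zero_le_one⟩
  have := hs.one_le_deriv_sq hlam hs_mem.1
  norm_num [hgs] at this

theorem self_le (hs : IsIVPSolution lam h g) (hlam : ∀ t ∈ Ici (0 : ℝ), 0 ≤ lam t)
    {t : ℝ} (ht : t ∈ Ici 0) : t ≤ h t := by
  have hmono : MonotoneOn (fun t => h t - t) (Ici 0) :=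
    monotoneOn_Ici_of_hasDerivWithinAt_nonneg
      (fun x hx => (hs.hasDerivWithinAt x hx).sub (hasDerivWithinAt_id x _))
      fun x hx => sub_nonneg.mpr (hs.one_le_deriv hlam (mem_Ici_of_Ioi hx))
  simpa [hs.map_zero] using hmono self_mem_Ici ht ht

theorem deriv_monotoneOn (hs : IsIVPSolution lam h g) (hlam : ∀ t ∈ Ici (0 : ℝ), 0 ≤ lam t) :
    MonotoneOn g (Ici 0) :=
  monotoneOn_Ici_of_hasDerivWithinAt_nonneg hs.hasDerivWithinAt_deriv fun x hx =>
    mul_nonneg (hlam x (mem_Ici_of_Ioi hx))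
      ((le_of_lt hx).trans (hs.self_le hlam (mem_Ici_of_Ioi hx)))

theorem le_mul_deriv (hs : IsIVPSolution lam h g) (hlam : ∀ t ∈ Ici (0 : ℝ), 0 ≤ lam t)
    {t : ℝ} (ht : t ∈ Ici 0) : h t ≤ t * g t := by
  have hmono : MonotoneOn (fun t => t * g t - h t) (Ici 0) :=
    monotoneOn_Ici_of_hasDerivWithinAt_nonneg
      (fun x hx => ((hasDerivWithinAt_id x _).mul (hs.hasDerivWithinAt_deriv x hx)).sub
        (hs.hasDerivWithinAt x hx))
      fun x hx => by
        have hx' := mem_Ici_of_Ioi hx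
        have hh_nonneg : 0 ≤ h x := (mem_Ici.mp hx').trans (hs.self_le hlam hx')
        have := mul_nonneg (mem_Ici.mp hx') (mul_nonneg (hlam x hx') hh_nonneg)
        simp only [id_eq]
        linarith
  simpa [hs.map_zero] using hmono self_mem_Ici ht ht

theorem deriv_le_exp (hs : IsIVPSolution lam h g) (hlam : ∀ t ∈ Ici (0 : ℝ), 0 ≤ lam t)
    {ψ : ℝ → ℝ} (hψ : ∀ t ∈ Ici (0 : ℝ), HasDerivWithinAt ψ (t * lam t) (Ici 0) t) (hψ0 : ψ 0 = 0)
    {t : ℝ} (ht : t ∈ Ici 0) : g t ≤ Real.exp (ψ t) := by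
  have hanti : AntitoneOn (fun t => Real.exp (-ψ t) * g t) (Ici 0) :=
    antitoneOn_Ici_of_hasDerivWithinAt_nonpos
      (fun x hx => ((hψ x hx).neg.exp).mul (hs.hasDerivWithinAt_deriv x hx))
      fun x hx => by
        have hx' := mem_Ici_of_Ioi hx
        have := mul_nonneg (Real.exp_pos (-ψ x)).le
          (mul_nonneg (hlam x hx') (sub_nonneg.mpr (hs.le_mul_deriv hlam hx')))
        simp only [Pi.neg_apply]
        linarith
  have : Real.exp (-ψ t) * g t ≤ Real.exp (-ψ 0) * g 0 := hanti self_mem_Ici ht ht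
  rwa [hψ0, hs.deriv_zero, neg_zero, Real.exp_zero, one_mul, Real.exp_neg,
    inv_mul_le_iff₀ (Real.exp_pos _), mul_one] at this

theorem le_exp_mul_self (hs : IsIVPSolution lam h g) (hlam : ∀ t ∈ Ici (0 : ℝ), 0 ≤ lam t)
    {ψ : ℝ → ℝ} (hψ : ∀ t ∈ Ici (0 : ℝ), HasDerivWithinAt ψ (t * lam t) (Ici 0) t) (hψ0 : ψ 0 = 0)
    {B : ℝ} (hψB : ∀ t ∈ Ici (0 : ℝ), ψ t ≤ B) {t : ℝ} (ht : t ∈ Ici 0) :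
    h t ≤ Real.exp B * t :=
  calc h t ≤ t * g t := hs.le_mul_deriv hlam ht
    _ ≤ t * Real.exp B := mul_le_mul_of_nonneg_left
        ((hs.deriv_le_exp hlam hψ hψ0 ht).trans (Real.exp_le_exp.mpr (hψB t ht))) ht
    _ = Real.exp B * t := mul_comm _ _

theorem deriv_le_one_add_mul_exp (hs : IsIVPSolution lam h g) (hlam : ∀ t ∈ Ici (0 : ℝ), 0 ≤ lam t)
    {ψ : ℝ → ℝ} (hψ : ∀ t ∈ Ici (0 : ℝ), HasDerivWithinAt ψ (t * lam t) (Ici 0) t) (hψ0 : ψ 0 = 0)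
    {B : ℝ} (hψB : ∀ t ∈ Ici (0 : ℝ), ψ t ≤ B) {t : ℝ} (ht : t ∈ Ici 0) :
    g t ≤ 1 + B * Real.exp B := by
  have hanti : AntitoneOn (fun t => g t - Real.exp B * ψ t) (Ici 0) :=
    antitoneOn_Ici_of_hasDerivWithinAt_nonpos
      (fun x hx => (hs.hasDerivWithinAt_deriv x hx).sub ((hψ x hx).const_mul _))
      fun x hx => by
        have hx' := mem_Ici_of_Ioi hx
        have := mul_nonneg (hlam x hx') (sub_nonneg.mpr (hs.le_exp_mul_self hlam hψ hψ0 hψB hx'))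
        linarith
  have : g t - Real.exp B * ψ t ≤ g 0 - Real.exp B * ψ 0 := hanti self_mem_Ici ht ht
  rw [hψ0, hs.deriv_zero, mul_zero, sub_zero] at this
  nlinarith [hψB t ht, Real.exp_pos B]

end IsIVPSolution

theorem stmt_10_general (lam h : ℝ → ℝ)
    (hlamc : ContinuousOn lam (Ici 0)) (hlamnn : ∀ t ∈ Ici (0 : ℝ), 0 ≤ lam t)
    (hb₀ : IntegrableOn (fun s => s * lam s) (Ioi 0))
    (hh : ContDiffOn ℝ 2 h (Ici 0))
    (ode : ∀ t ∈ Ici (0 : ℝ),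
      derivWithin (derivWithin h (Ici 0)) (Ici 0) t = lam t * h t)
    (h0 : h 0 = 0) (h'0 : derivWithin h (Ici 0) 0 = 1)
    :
    (∀ t ∈ Ici (0 : ℝ),
      t ≤ h t ∧ h t ≤ Real.exp (∫ s in Ioi (0 : ℝ), s * lam s) * t) ∧
    MonotoneOn (derivWithin h (Ici 0)) (Ici 0) ∧
    (∀ t ∈ Ici (0 : ℝ),
      1 ≤ derivWithin h (Ici 0) t ∧
      derivWithin h (Ici 0) t ≤
        1 + (∫ s in Ioi (0 : ℝ), s * lam s) *
          Real.exp (∫ s in Ioi (0 : ℝ), s * lam s)) := by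
  have hderiv : ContDiffOn ℝ 1 (derivWithin h (Ici 0)) (Ici 0) :=
    hh.derivWithin (uniqueDiffOn_Ici 0) (by norm_num)
  have hs : IsIVPSolution lam h (derivWithin h (Ici 0)) :=
    { hasDerivWithinAt := fun t ht => (hh.differentiableOn (by norm_num) t ht).hasDerivWithinAt
      hasDerivWithinAt_deriv := fun t ht =>
        ode t ht ▸ (hderiv.differentiableOn one_ne_zero t ht).hasDerivWithinAt
      map_zero := h0
      deriv_zero := h'0 }
  have hψ : ∀ t ∈ Ici (0 : ℝ),
      HasDerivWithinAt (fun u => ∫ s in (0 : ℝ)..u, s * lam s) (t * lam t) (Ici 0) t :=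
    fun t ht => hasDerivWithinAt_intervalIntegral_Ici (continuousOn_id.mul hlamc) ht
  have hψ0 : ∫ s in (0 : ℝ)..0, s * lam s = 0 := intervalIntegral.integral_same
  have hψB : ∀ t ∈ Ici (0 : ℝ), ∫ s in (0 : ℝ)..t, s * lam s ≤ ∫ s in Ioi (0 : ℝ), s * lam s :=
    fun t ht => intervalIntegral_le_integral_Ioi hb₀
      (fun s hs => mul_nonneg (le_of_lt hs) (hlamnn s (mem_Ici_of_Ioi hs))) ht
  exact ⟨fun t ht => ⟨hs.self_le hlamnn ht, hs.le_exp_mul_self hlamnn hψ hψ0 hψB ht⟩,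
    hs.deriv_monotoneOn hlamnn,
    fun t ht => ⟨hs.one_le_deriv hlamnn ht, hs.deriv_le_one_add_mul_exp hlamnn hψ hψ0 hψB ht⟩⟩

/-- `t ≤ h(t) ≤ e^{b₀} t`; `h'` is nondecreasing with `1 ≤ h' ≤ 1 + b₀ e^{b₀}`,
where `b₀ = ∫₀^∞ s λ(s) ds`. -/
theorem stmt_10 (lam h : ℝ → ℝ)
    (hlamc : ContinuousOn lam (Ici 0)) (hlamnn : ∀ t ∈ Ici (0 : ℝ), 0 ≤ lam t)
    (hlamanti : AntitoneOn lam (Ici 0))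
    (hb₀ : IntegrableOn (fun s => s * lam s) (Ioi 0))
    (hh : ContDiffOn ℝ 2 h (Ici 0))
    (ode : ∀ t ∈ Ici (0 : ℝ),
      derivWithin (derivWithin h (Ici 0)) (Ici 0) t = lam t * h t)
    (h0 : h 0 = 0) (h'0 : derivWithin h (Ici 0) 0 = 1)
    :
    (∀ t ∈ Ici (0 : ℝ),
      t ≤ h t ∧ h t ≤ Real.exp (∫ s in Ioi (0 : ℝ), s * lam s) * t) ∧
    MonotoneOn (derivWithin h (Ici 0)) (Ici 0) ∧
    (∀ t ∈ Ici (0 : ℝ),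
      1 ≤ derivWithin h (Ici 0) t ∧
      derivWithin h (Ici 0) t ≤
        1 + (∫ s in Ioi (0 : ℝ), s * lam s) *
          Real.exp (∫ s in Ioi (0 : ℝ), s * lam s)) :=
  stmt_10_general lam h hlamc hlamnn hb₀ hh ode h0 h'0
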